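/- arXiv:2404.05154 — 4 statements merged into one kernel-verified Lean document; each statement's English description precedes it below -/
import Mathlib

section
/- Suppose s > 2, 2 ≤ k ≤ s-1, (γ,d) = (n_k, m_k), l₁ = (n_{k+1} - n_k)/(m_k - m_{k+1}), and l₁ + l₂ = (n_k - n_{k-1})/(m_{k-1} - m_k). If T_{k-1} ≤ δ ≤ T_k, then for every (i,j) with b_{ij} ≠ 0: γ + l₁ d ≥ i + l₁ j, γ + l₁ d ≥ l₁ δ, and (l₁+l₂) δ ≥ γ + (l₁+l₂) d ≥ i + (l₁+l₂) j. -/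
/-!
An extreme point `B` of `N(q)` lies in a quadrant contained in `N(q)`, so no point of `N(q)` lies
above `B` on the vertical line through it; hence `B` lies on or above every chord of `N(q)` passing
over it, and the vertices form a concave chain. The support is finite (it is confined by `V₁` and
`V_s`), so for `μ > 0` the form `x + μ y` attains its maximum over `N(q)` at an extreme point, i.e.
at a vertex. When `μ` is the slope `l₁` of `[V_k, V_{k+1}]` or `l₁ + l₂` of `[V_{k-1}, V_k]`,
concavity puts that maximum at `V_k`. The inequalities involving `δ` are `T_{k-1} ≤ δ ≤ T_k`
multiplied out.
-/

open Set

noncomputable section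

/-- The quadrant `D(i,j) = {(x,y) : x ≤ i, y ≤ j}`. -/
def quadrant (i j : ℕ) : Set (ℝ × ℝ) := {p | p.1 ≤ (i : ℝ) ∧ p.2 ≤ (j : ℝ)}

/-- The Newton polygon of `q = Σ b_{ij} z^i w^j`: the convex hull of the union of
the quadrants `D(i,j)` over all `(i,j)` with `b_{ij} ≠ 0`. -/
def newtonPolygon (b : ℕ → ℕ → ℂ) : Set (ℝ × ℝ) :=
  convexHull ℝ (⋃ (i : ℕ) (j : ℕ) (_ : b i j ≠ 0), quadrant i j)

/-- `n, m : ℕ → ℕ` (on indices `1,…,s`) enumerate the vertices of the Newton polygon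
of `q`, with `n 1 < … < n s` and `m 1 > … > m s`. -/
def IsNewtonVertexData (b : ℕ → ℕ → ℂ) (s : ℕ) (n m : ℕ → ℕ) : Prop :=
  1 ≤ s ∧
  StrictMonoOn n (Set.Icc 1 s) ∧
  StrictAntiOn m (Set.Icc 1 s) ∧
  Set.extremePoints ℝ (newtonPolygon b) =
    (fun k => ((n k : ℝ), (m k : ℝ))) '' (Set.Icc 1 s)

section LexHalfSpace

variable {E : Type*} [AddCommGroup E] [Module ℝ E]

theorem convex_setOf_toLex_le (φ ψ : E →ₗ[ℝ] ℝ) (c d : ℝ) :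
    Convex ℝ {x | toLex (φ x, ψ x) ≤ toLex (c, d)} := by
  intro x hx y hy a b ha hb hab
  obtain rfl : b = 1 - a := by linarith
  simp only [mem_ofPred, map_add, map_smul, smul_eq_mul, Prod.Lex.toLex_le_toLex] at *
  rcases ha.eq_or_lt with rfl | ha
  · simpa using hy
  rcases hb.eq_or_lt with hb | hb
  · simpa [show a = 1 by linarith] using hx
  rcases hx with hx | ⟨hx₁, hx₂⟩ <;> rcases hy with hy | ⟨hy₁, hy₂⟩
  · left; nlinarith
  · left; nlinarith
  · left; nlinarith
  · right; constructor <;> nlinarith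

theorem mem_extremePoints_setOf_toLex_le {φ ψ : E →ₗ[ℝ] ℝ}
    (hinj : Function.Injective fun x ↦ (φ x, ψ x)) (z : E) :
    z ∈ extremePoints ℝ {x | toLex (φ x, ψ x) ≤ toLex (φ z, ψ z)} := by
  refine ⟨mem_ofPred.2 le_rfl, ?_⟩
  rintro x hx y hy ⟨a, b, ha, hb, hab, rfl⟩
  obtain rfl : b = 1 - a := by linarith
  simp only [mem_ofPred, map_add, map_smul, smul_eq_mul, Prod.Lex.toLex_le_toLex] at hx hy
  have hφ : φ x = φ y := by
    rcases hx with hx | ⟨hx, -⟩ <;> rcases hy with hy | ⟨hy, -⟩ <;> nlinarith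
  have hψ : ψ x = ψ y := by
    rcases hx with hx | ⟨-, hx⟩ <;> rcases hy with hy | ⟨-, hy⟩ <;> nlinarith
  obtain rfl : x = y := hinj (Prod.ext hφ hψ)
  rw [← add_smul, add_sub_cancel, one_smul]

end LexHalfSpace

namespace NewtonPolygon

variable {b : ℕ → ℕ → ℂ}

theorem mem_of_le {i j : ℕ} (hb : b i j ≠ 0) {p : ℝ × ℝ} (hp : p ≤ ((i : ℝ), (j : ℝ))) :
    p ∈ newtonPolygon b :=
  subset_convexHull ℝ _ (mem_iUnion₂.2 ⟨i, j, mem_iUnion.2 ⟨hb, hp⟩⟩)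

theorem exists_le_of_mem_extremePoints {B : ℝ × ℝ}
    (hB : B ∈ extremePoints ℝ (newtonPolygon b)) :
    ∃ i j : ℕ, b i j ≠ 0 ∧ B ≤ ((i : ℝ), (j : ℝ)) := by
  obtain ⟨i, j, hb, hBij⟩ : ∃ i j : ℕ, b i j ≠ 0 ∧ B ∈ quadrant i j := by
    simpa only [mem_iUnion, exists_prop] using extremePoints_convexHull_subset hB
  exact ⟨i, j, hb, hBij⟩

/-- `B` is the midpoint of `Q` and `2B - Q`, which lies in the quadrant containing `B`. -/
theorem eq_of_le_of_mem_extremePoints {B Q : ℝ × ℝ}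
    (hB : B ∈ extremePoints ℝ (newtonPolygon b)) (hQ : Q ∈ newtonPolygon b) (hBQ : B ≤ Q) :
    Q = B := by
  obtain ⟨i, j, hb, hBij⟩ := exists_le_of_mem_extremePoints hB
  have hQ' : B - (Q - B) ∈ newtonPolygon b :=
    mem_of_le hb ((sub_le_self _ (sub_nonneg.2 hBQ)).trans hBij)
  have hseg : B ∈ openSegment ℝ (B - (Q - B)) Q :=
    ⟨1 / 2, 1 / 2, by norm_num, by norm_num, by norm_num, by module⟩
  simpa [sub_eq_zero] using hB.2 hQ' hQ hseg

theorem snd_le_of_fst_le {B Q : ℝ × ℝ} (hB : B ∈ extremePoints ℝ (newtonPolygon b))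
    (hQ : Q ∈ newtonPolygon b) (h : B.1 ≤ Q.1) : Q.2 ≤ B.2 := by
  by_contra! h'
  exact h'.ne' (congrArg Prod.snd (eq_of_le_of_mem_extremePoints hB hQ ⟨h, h'.le⟩))

theorem chord_le {A B C : ℝ × ℝ} (hA : A ∈ newtonPolygon b)
    (hB : B ∈ extremePoints ℝ (newtonPolygon b)) (hC : C ∈ newtonPolygon b)
    (hAB : A.1 < B.1) (hBC : B.1 < C.1) :
    (C.1 - B.1) * A.2 + (B.1 - A.1) * C.2 ≤ (C.1 - A.1) * B.2 := by
  have hAC : 0 < C.1 - A.1 := by linarith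
  set a := (C.1 - B.1) / (C.1 - A.1)
  set c := (B.1 - A.1) / (C.1 - A.1)
  have hQ : a • A + c • C ∈ newtonPolygon b :=
    convex_convexHull ℝ _ hA hC (by positivity) (by positivity)
      (by simp only [a, c]; field_simp; ring)
  have hQ₁ : B.1 ≤ (a • A + c • C).1 := by
    simp only [Prod.fst_add, Prod.smul_fst, smul_eq_mul, a, c]
    field_simp
    linarith
  have hQ₂ := snd_le_of_fst_le hB hQ hQ₁
  simp only [Prod.snd_add, Prod.smul_snd, smul_eq_mul, a, c] at hQ₂
  rwa [div_mul_eq_mul_div, div_mul_eq_mul_div, ← add_div, div_le_iff₀ hAC, mul_comm B.2] at hQ₂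

theorem chord_le_linear {A B C : ℝ × ℝ} (hA : A ∈ newtonPolygon b)
    (hB : B ∈ extremePoints ℝ (newtonPolygon b)) (hC : C ∈ newtonPolygon b)
    (hAB : A.1 < B.1) (hBC : B.1 < C.1) {μ : ℝ} (hμ : 0 ≤ μ) :
    (C.1 - B.1) * (A.1 + μ * A.2) + (B.1 - A.1) * (C.1 + μ * C.2) ≤
      (C.1 - A.1) * (B.1 + μ * B.2) := by
  linear_combination μ * chord_le hA hB hC hAB hBC

theorem exists_mem_extremePoints_forall_le (hfin : {p : ℕ × ℕ | b p.1 p.2 ≠ 0}.Finite)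
    (hne : {p : ℕ × ℕ | b p.1 p.2 ≠ 0}.Nonempty) {μ : ℝ} (hμ : 0 < μ) :
    ∃ z ∈ extremePoints ℝ (newtonPolygon b),
      ∀ i j : ℕ, b i j ≠ 0 → (i : ℝ) + μ * j ≤ z.1 + μ * z.2 := by
  set φ : ℝ × ℝ →ₗ[ℝ] ℝ := LinearMap.fst ℝ ℝ ℝ + μ • LinearMap.snd ℝ ℝ ℝ
  have hφ (x : ℝ × ℝ) : φ x = x.1 + μ * x.2 := rfl
  let ι : ℕ × ℕ → ℝ × ℝ := fun p ↦ (p.1, p.2)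
  -- The maximizer of `x + μ y` with the largest `x` is an extreme point of `N(q)`.
  obtain ⟨p, hp, hmax⟩ := Set.exists_max_image _ (fun p ↦ toLex (φ (ι p), (ι p).1)) hfin hne
  have hsub : newtonPolygon b ⊆
      {x | toLex (φ x, LinearMap.fst ℝ ℝ ℝ x) ≤ toLex (φ (ι p), (ι p).1)} := by
    refine convexHull_min ?_ (convex_setOf_toLex_le _ _ _ _)
    simp only [iUnion_subset_iff]
    intro i j hb x hx
    refine (Prod.Lex.toLex_mono ⟨?_, hx.1⟩).trans (hmax (i, j) hb)
    simp only [hφ]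
    nlinarith [hx.1, hx.2]
  have hinj : Function.Injective fun x ↦ (φ x, LinearMap.fst ℝ ℝ ℝ x) := by
    intro x y hxy
    simp only [Prod.mk.injEq, hφ, LinearMap.fst_apply] at hxy
    exact Prod.ext hxy.2 (mul_left_cancel₀ hμ.ne' (by linarith))
  refine ⟨ι p, inter_extremePoints_subset_extremePoints_of_subset hsub
    ⟨mem_of_le hp le_rfl, mem_extremePoints_setOf_toLex_le hinj _⟩, fun i j hb ↦ ?_⟩
  exact Prod.Lex.monotone_fst _ _ (hmax (i, j) hb)

end NewtonPolygon

namespace IsNewtonVertexData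

variable {b : ℕ → ℕ → ℂ} {s : ℕ} {n m : ℕ → ℕ}

theorem mem_extremePoints (h : IsNewtonVertexData b s n m) {t : ℕ} (ht : t ∈ Icc 1 s) :
    ((n t : ℝ), (m t : ℝ)) ∈ extremePoints ℝ (newtonPolygon b) := by
  rw [h.2.2.2]
  exact mem_image_of_mem _ ht

theorem mem_newtonPolygon (h : IsNewtonVertexData b s n m) {t : ℕ} (ht : t ∈ Icc 1 s) :
    ((n t : ℝ), (m t : ℝ)) ∈ newtonPolygon b :=
  (h.mem_extremePoints ht).1

theorem n_lt (h : IsNewtonVertexData b s n m) {t u : ℕ} (ht : 1 ≤ t) (htu : t < u) (hu : u ≤ s) :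
    (n t : ℝ) < n u := by
  exact_mod_cast h.2.1 ⟨ht, by omega⟩ ⟨by omega, hu⟩ htu

theorem m_lt (h : IsNewtonVertexData b s n m) {t u : ℕ} (ht : 1 ≤ t) (htu : t < u) (hu : u ≤ s) :
    (m u : ℝ) < m t := by
  exact_mod_cast h.2.2.1 ⟨ht, by omega⟩ ⟨by omega, hu⟩ htu

/-- The vertices `V₁` and `V_s` confine the support to a box: `(-1, j)`, `V₁`, `V_s` bound `j`
and `V₁`, `V_s`, `(i, -1)` bound `i`. -/
theorem support_finite (h : IsNewtonVertexData b s n m) (hs : 2 ≤ s) :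
    {p : ℕ × ℕ | b p.1 p.2 ≠ 0}.Finite := by
  have h1 : 1 ∈ Icc 1 s := ⟨le_rfl, by omega⟩
  have hs' : s ∈ Icc 1 s := ⟨by omega, le_rfl⟩
  have hn' : (n 1 : ℝ) + 1 ≤ n s := by exact_mod_cast h.2.1 h1 hs' (by omega)
  have hm' : (m s : ℝ) + 1 ≤ m 1 := by exact_mod_cast h.2.2.1 h1 hs' (by omega)
  refine ((finite_Iic (n s * (m s + 2))).prod (finite_Iic ((n s + 1) * m 1))).subset ?_
  rintro ⟨i, j⟩ (hb : b i j ≠ 0)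
  have hi : (i : ℝ) ≤ n s * (m s + 2) := by
    by_contra! hi
    have hsi : (n s : ℝ) < i := by nlinarith
    have := NewtonPolygon.chord_le (h.mem_newtonPolygon h1) (h.mem_extremePoints hs')
      (NewtonPolygon.mem_of_le (p := (i, -1)) hb ⟨le_rfl, by simp; linarith⟩) (by linarith) hsi
    nlinarith [mul_le_mul_of_nonneg_left hm' (sub_nonneg.2 hsi.le)]
  have hj : (j : ℝ) ≤ (n s + 1) * m 1 := by
    have := NewtonPolygon.chord_le
      (NewtonPolygon.mem_of_le (p := (-1, j)) hb ⟨by simp; linarith, le_rfl⟩)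
      (h.mem_extremePoints h1) (h.mem_newtonPolygon hs') (by simp; linarith) (by linarith)
    nlinarith [mul_le_mul_of_nonneg_right hn' (Nat.cast_nonneg (α := ℝ) j)]
  exact ⟨by exact_mod_cast hi, by exact_mod_cast hj⟩

theorem chord_le (h : IsNewtonVertexData b s n m) {u v w : ℕ} (hu : 1 ≤ u) (huv : u < v)
    (hvw : v < w) (hw : w ≤ s) {μ : ℝ} (hμ : 0 ≤ μ) :
    ((n w : ℝ) - n v) * (n u + μ * m u) + ((n v : ℝ) - n u) * (n w + μ * m w) ≤
      ((n w : ℝ) - n u) * (n v + μ * m v) :=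
  NewtonPolygon.chord_le_linear (h.mem_newtonPolygon ⟨hu, by omega⟩)
    (h.mem_extremePoints ⟨by omega, by omega⟩) (h.mem_newtonPolygon ⟨by omega, hw⟩)
    (h.n_lt hu huv (by omega)) (h.n_lt (by omega) hvw hw) hμ

/-- If a vertex `V_u` off the edge had a larger value of `x + μ y`, the end of the edge nearer to
`V_u` would lie strictly below the chord joining `V_u` to the other end. -/
theorem add_mul_le_of_edge (h : IsNewtonVertexData b s n m) {t : ℕ} (ht : 1 ≤ t) (hts : t + 1 ≤ s)
    {μ : ℝ} (hμ : 0 < μ) (hedge : (n t : ℝ) + μ * m t = n (t + 1) + μ * m (t + 1)) :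
    ∀ i j : ℕ, b i j ≠ 0 → (i : ℝ) + μ * j ≤ n t + μ * m t := by
  have hne : {p : ℕ × ℕ | b p.1 p.2 ≠ 0}.Nonempty := by
    obtain ⟨i, j, hb, -⟩ :=
      NewtonPolygon.exists_le_of_mem_extremePoints (h.mem_extremePoints ⟨ht, by omega⟩)
    exact ⟨(i, j), hb⟩
  obtain ⟨z, hz, hmax⟩ :=
    NewtonPolygon.exists_mem_extremePoints_forall_le (h.support_finite (by omega)) hne hμ
  rw [h.2.2.2] at hz
  obtain ⟨u, ⟨hu, hus⟩, rfl⟩ := hz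
  refine fun i j hb ↦ (hmax i j hb).trans ?_
  have hgap := h.n_lt ht (lt_add_one t) hts
  rcases lt_or_ge u t with hut | htu
  · refine le_of_mul_le_mul_left ?_ (sub_pos.2 hgap)
    linear_combination h.chord_le hu hut (lt_add_one t) hts hμ.le + ((n t : ℝ) - n u) * hedge
  rcases htu.eq_or_lt with rfl | htu
  · exact le_rfl
  rcases (show t + 1 ≤ u by omega).eq_or_lt with rfl | htu
  · exact hedge.ge
  · refine le_of_mul_le_mul_left ?_ (sub_pos.2 hgap)
    linear_combination h.chord_le ht (lt_add_one t) htu hus hμ.le + ((n t : ℝ) - n u) * hedge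

end IsNewtonVertexData

theorem stmt4_general (b : ℕ → ℕ → ℂ) (s : ℕ) (n m : ℕ → ℕ)
    (h : IsNewtonVertexData b s n m)
    (k : ℕ) (hk1 : 2 ≤ k) (hk2 : k ≤ s - 1)
    (δ : ℕ) (l₁ l₂ Tkm Tk : ℝ)
    (hl1 : l₁ = ((n (k+1) : ℝ) - (n k : ℝ)) / ((m k : ℝ) - (m (k+1) : ℝ)))
    (hl12 : l₁ + l₂ = ((n k : ℝ) - (n (k-1) : ℝ)) / ((m (k-1) : ℝ) - (m k : ℝ)))
    (hTkm : Tkm = (m k : ℝ) + (n k : ℝ) / (l₁ + l₂))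
    (hTk : Tk = (m k : ℝ) + (n k : ℝ) / l₁)
    (hδ1 : Tkm ≤ (δ : ℝ)) (hδ2 : (δ : ℝ) ≤ Tk) :
    ∀ i j : ℕ, b i j ≠ 0 →
      ((i : ℝ) + l₁ * (j : ℝ) ≤ (n k : ℝ) + l₁ * (m k : ℝ)) ∧
      (l₁ * (δ : ℝ) ≤ (n k : ℝ) + l₁ * (m k : ℝ)) ∧
      ((n k : ℝ) + (l₁ + l₂) * (m k : ℝ) ≤ (l₁ + l₂) * (δ : ℝ)) ∧
      ((i : ℝ) + (l₁ + l₂) * (j : ℝ) ≤ (n k : ℝ) + (l₁ + l₂) * (m k : ℝ)) := by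
  obtain ⟨k, rfl⟩ : ∃ k', k = k' + 1 := ⟨k - 1, by omega⟩
  rw [Nat.add_sub_cancel] at hl12
  have hn₁ := h.n_lt (by omega) (lt_add_one (k + 1)) (by omega)
  have hm₁ := h.m_lt (by omega) (lt_add_one (k + 1)) (by omega)
  have hn₀ := h.n_lt (by omega) (lt_add_one k) (by omega)
  have hm₀ := h.m_lt (by omega) (lt_add_one k) (by omega)
  have hl₁ : 0 < l₁ := hl1 ▸ div_pos (sub_pos.2 hn₁) (sub_pos.2 hm₁)
  have hL : 0 < l₁ + l₂ := hl12 ▸ div_pos (sub_pos.2 hn₀) (sub_pos.2 hm₀)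
  have hedge₁ : (n (k + 1) : ℝ) + l₁ * m (k + 1) = n (k + 1 + 1) + l₁ * m (k + 1 + 1) := by
    rw [hl1]; field_simp [(sub_pos.2 hm₁).ne']; ring
  have hedge₀ : (n k : ℝ) + (l₁ + l₂) * m k = n (k + 1) + (l₁ + l₂) * m (k + 1) := by
    rw [hl12]; field_simp [(sub_pos.2 hm₀).ne']; ring
  intro i j hb
  refine ⟨h.add_mul_le_of_edge (by omega) (by omega) hl₁ hedge₁ i j hb, ?_, ?_,
    hedge₀ ▸ h.add_mul_le_of_edge (by omega) (by omega) hL hedge₀ i j hb⟩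
  · have := (le_div_iff₀ hl₁).1 (show (δ : ℝ) - m (k + 1) ≤ n (k + 1) / l₁ by linarith)
    linarith
  · have := (div_le_iff₀ hL).1 (show (n (k + 1) : ℝ) / (l₁ + l₂) ≤ δ - m (k + 1) by linarith)
    linarith

/-- Case 4: if `s > 2`, `2 ≤ k ≤ s-1`, `(γ,d) = (n k, m k)`,
`l₁ = (n_{k+1}-n_k)/(m_k-m_{k+1})`, `l₁+l₂ = (n_k-n_{k-1})/(m_{k-1}-m_k)`, and
`T_{k-1} ≤ δ ≤ T_k`, then for every `(i,j)` with `b_{ij} ≠ 0`: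
`γ + l₁ d ≥ i + l₁ j`, `γ + l₁ d ≥ l₁ δ`, and
`(l₁+l₂) δ ≥ γ + (l₁+l₂) d ≥ i + (l₁+l₂) j`. -/
theorem stmt4 (b : ℕ → ℕ → ℂ) (s : ℕ) (n m : ℕ → ℕ)
    (h : IsNewtonVertexData b s n m) (hs : 2 < s)
    (k : ℕ) (hk1 : 2 ≤ k) (hk2 : k ≤ s - 1)
    (δ : ℕ) (hδ : 2 ≤ δ) (l₁ l₂ Tkm Tk : ℝ)
    (hl1 : l₁ = ((n (k+1) : ℝ) - (n k : ℝ)) / ((m k : ℝ) - (m (k+1) : ℝ)))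
    (hl12 : l₁ + l₂ = ((n k : ℝ) - (n (k-1) : ℝ)) / ((m (k-1) : ℝ) - (m k : ℝ)))
    (hTkm : Tkm = (m k : ℝ) + (n k : ℝ) / (l₁ + l₂))
    (hTk : Tk = (m k : ℝ) + (n k : ℝ) / l₁)
    (hδ1 : Tkm ≤ (δ : ℝ)) (hδ2 : (δ : ℝ) ≤ Tk) :
    ∀ i j : ℕ, b i j ≠ 0 →
      ((i : ℝ) + l₁ * (j : ℝ) ≤ (n k : ℝ) + l₁ * (m k : ℝ)) ∧
      (l₁ * (δ : ℝ) ≤ (n k : ℝ) + l₁ * (m k : ℝ)) ∧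
      ((n k : ℝ) + (l₁ + l₂) * (m k : ℝ) ≤ (l₁ + l₂) * (δ : ℝ)) ∧
      ((i : ℝ) + (l₁ + l₂) * (j : ℝ) ≤ (n k : ℝ) + (l₁ + l₂) * (m k : ℝ)) :=
  stmt4_general b s n m h k hk1 hk2 δ l₁ l₂ Tkm Tk hl1 hl12 hTkm hTk hδ1 hδ2
end
end

section
/- Let f(z,w) = (p(z), q(z,w)) with p(z) = z^δ(1+ζ(z)) and q(z,w) = z^γ w^d (1+η(z,w)), where |ζ| < ε and |η| < ε on U = {|z| > R, |w| > R|z|^{l}} for some 0 < ε < 1/2. If d ≥ 2, l ≥ 0, and γ + l d ≥ l δ, then for all sufficiently large R, f(U) ⊆ U. -/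
open Set

noncomputable section

/-- The region `U_R = {(z,w) : |z| > R, |w| > R |z|^l}`. -/
def Ureg (l R : ℝ) : Set (ℂ × ℂ) :=
  {p | R < ‖p.1‖ ∧ R * ‖p.1‖ ^ l < ‖p.2‖}

/-! With `u = |1 + ζ| ∈ (1/2, 3/2)` and `v = |1 + η| > 1/2`, the first coordinate has modulus
`|z|^δ u > R² / 2 ≥ R`. For the second, `R (|z|^δ u)^l ≤ R (3/2)^l |z|^{lδ}`, and once
`R ≥ 2 (3/2)^l` this is at most `(R^d / 2) |z|^{γ + l d} = |z|^γ (R |z|^l)^d / 2`, which is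
below `|z|^γ |w|^d v`. The exponent condition `lδ ≤ γ + l d` enters only through
`|z|^{lδ} ≤ |z|^{γ + l d}` for `|z| ≥ 1`. -/

theorem Ureg_anti {l R₀ R : ℝ} (h : R₀ ≤ R) : Ureg l R ⊆ Ureg l R₀ := fun _ ⟨hz, hw⟩ =>
  ⟨h.trans_lt hz,
    (mul_le_mul_of_nonneg_right h (Real.rpow_nonneg (norm_nonneg _) _)).trans_lt hw⟩

theorem norm_one_add_mem_Ioo {E : Type*} [SeminormedRing E] [NormOneClass E] {x : E}
    (hx : ‖x‖ < 1 / 2) : ‖1 + x‖ ∈ Ioo (1 / 2 : ℝ) (3 / 2) := by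
  have h := abs_norm_sub_norm_le (1 + x) 1
  rw [norm_one, add_sub_cancel_left] at h
  constructor <;> linarith [abs_le.mp h]

theorem lt_pow_mul_of_two_le {R A u : ℝ} {δ : ℕ} (hR : 2 ≤ R) (hA : R < A) (hδ : 2 ≤ δ)
    (hu : 1 / 2 < u) : R < A ^ δ * u := by
  have hAδ : A ^ 2 ≤ A ^ δ := pow_le_pow_right₀ (by linarith) hδ
  nlinarith

theorem two_mul_mul_le_pow {c R : ℝ} {d : ℕ} (hc : 2 * c ≤ R) (hR : 1 ≤ R) (hd : 2 ≤ d) :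
    2 * c * R ≤ R ^ d :=
  calc 2 * c * R ≤ R ^ 2 := by nlinarith
    _ ≤ R ^ d := pow_le_pow_right₀ hR hd

theorem rpow_pow_le_pow_mul_rpow_pow {A l : ℝ} {δ γ d : ℕ} (hA : 1 ≤ A)
    (hld : l * δ ≤ γ + l * d) : (A ^ l) ^ δ ≤ A ^ γ * (A ^ l) ^ d := by
  have hA0 : 0 ≤ A := by linarith
  simp only [← Real.rpow_natCast, ← Real.rpow_mul hA0, ← Real.rpow_add (by linarith : 0 < A)]
  exact Real.rpow_le_rpow_of_exponent_le hA hld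

theorem rpow_pow_mul_lt_pow_mul_pow_mul {R A B u v l : ℝ} {δ γ d : ℕ} (hl : 0 ≤ l)
    (hld : l * δ ≤ γ + l * d) (hd : 2 ≤ d) (hR : 2 * (3 / 2) ^ l ≤ R) (hA : 1 ≤ A)
    (hB : R * A ^ l < B) (hu₀ : 0 ≤ u) (hu : u ≤ 3 / 2) (hv : 1 / 2 < v) :
    R * (A ^ δ * u) ^ l < A ^ γ * B ^ d * v := by
  have hA0 : 0 ≤ A := by linarith
  have hR1 : 1 ≤ R := by linarith [Real.one_le_rpow (by norm_num : (1 : ℝ) ≤ 3 / 2) hl]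
  have hRAl : 0 < R * A ^ l := by positivity
  calc R * (A ^ δ * u) ^ l = R * u ^ l * (A ^ l) ^ δ := by
        rw [Real.mul_rpow (by positivity) hu₀, ← Real.rpow_pow_comm hA0]; ring
    _ ≤ R * (3 / 2) ^ l * (A ^ γ * (A ^ l) ^ d) := by
        gcongr
        exact rpow_pow_le_pow_mul_rpow_pow hA hld
    _ ≤ R ^ d / 2 * (A ^ γ * (A ^ l) ^ d) := by
        gcongr
        linarith [two_mul_mul_le_pow hR hR1 hd]
    _ = A ^ γ * (R * A ^ l) ^ d * (1 / 2) := by ring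
    _ < A ^ γ * (R * A ^ l) ^ d * v := by gcongr
    _ ≤ A ^ γ * B ^ d * v := by gcongr

theorem stmt10_general (δ d γ : ℕ) (hδ : 2 ≤ δ) (hd : 2 ≤ d)
    (l : ℝ) (hl : 0 ≤ l) (hld : l * (δ : ℝ) ≤ (γ : ℝ) + l * (d : ℝ))
    (ζ : ℂ → ℂ) (η : ℂ → ℂ → ℂ) (ε R₀ : ℝ)
    (hε : ε < 1/2)
    (hζ : ∀ p ∈ Ureg l R₀, ‖ζ p.1‖ < ε)
    (hη : ∀ p ∈ Ureg l R₀, ‖η p.1 p.2‖ < ε) :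
    ∃ R₁, R₀ ≤ R₁ ∧ ∀ R, R₁ ≤ R → ∀ p ∈ Ureg l R,
      (p.1 ^ δ * (1 + ζ p.1), p.1 ^ γ * p.2 ^ d * (1 + η p.1 p.2)) ∈ Ureg l R := by
  refine ⟨max R₀ (max 2 (2 * (3 / 2) ^ l)), le_max_left _ _, fun R hR p hp => ?_⟩
  obtain ⟨hR₀R, h2R, hlR⟩ : R₀ ≤ R ∧ 2 ≤ R ∧ 2 * (3 / 2) ^ l ≤ R := by
    simpa only [max_le_iff] using hR
  have hpR₀ := Ureg_anti hR₀R hp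
  obtain ⟨hu₁, hu₂⟩ := norm_one_add_mem_Ioo ((hζ p hpR₀).trans hε)
  obtain ⟨hv₁, -⟩ := norm_one_add_mem_Ioo ((hη p hpR₀).trans hε)
  have hz : 1 ≤ ‖p.1‖ := by linarith [hp.1]
  have hfz : R < ‖p.1 ^ δ * (1 + ζ p.1)‖ := by
    rw [norm_mul, norm_pow]
    exact lt_pow_mul_of_two_le h2R hp.1 hδ hu₁
  refine ⟨hfz, ?_⟩
  simp only [norm_mul, norm_pow]
  exact rpow_pow_mul_lt_pow_mul_pow_mul hl hld hd hlR hz hp.2 (norm_nonneg _) hu₂.le hv₁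

/-- If `p(z) = z^δ(1+ζ(z))`, `q(z,w) = z^γ w^d (1+η(z,w))` with `|ζ| < ε`, `|η| < ε`
on `U_{R₀}` for some `0 < ε < 1/2`, and `d ≥ 2`, `l ≥ 0`, `γ + l d ≥ l δ`, then for all
sufficiently large `R`, `f(U_R) ⊆ U_R`. -/
theorem stmt10 (δ d γ : ℕ) (hδ : 2 ≤ δ) (hd : 2 ≤ d)
    (l : ℝ) (hl : 0 ≤ l) (hld : l * (δ : ℝ) ≤ (γ : ℝ) + l * (d : ℝ))
    (ζ : ℂ → ℂ) (η : ℂ → ℂ → ℂ) (ε R₀ : ℝ)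
    (hε0 : 0 < ε) (hε : ε < 1/2) (hR₀ : 1 ≤ R₀)
    (hζ : ∀ p ∈ Ureg l R₀, ‖ζ p.1‖ < ε)
    (hη : ∀ p ∈ Ureg l R₀, ‖η p.1 p.2‖ < ε) :
    ∃ R₁, R₀ ≤ R₁ ∧ ∀ R, R₁ ≤ R → ∀ p ∈ Ureg l R,
      (p.1 ^ δ * (1 + ζ p.1), p.1 ^ γ * p.2 ^ d * (1 + η p.1 p.2)) ∈ Ureg l R :=
  stmt10_general δ d γ hδ hd l hl hld ζ η ε R₀ hε hζ hη
end
end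

section
/- Let P be a holomorphic function on the half-plane H_a = {Z ∈ ℂ : Re Z > a} satisfying |P(Z) − δZ| < ε̃ for all Z ∈ H_a, where δ ≥ 2 is an integer and ε̃ > 0. Then P is injective on {Z : Re Z > a + 2ε̃/δ}. -/
/-!
Writing `P = δ·Z + g` with `‖g‖ < ε̃`, the Cauchy estimate on discs of radius `2ε̃/δ`, which fit
in the half-plane `{Re Z > a}`, gives `‖g'‖ ≤ δ/2` on `{Re Z > a + 2ε̃/δ}`. On this convex set the
mean value inequality then makes `g` `δ/2`-Lipschitz, which is too weak to cancel the term `δ·Z`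
between two distinct points.
-/

open Set Metric

lemma Complex.norm_deriv_le_of_forall_re_gt_norm_le {F : Type*} [NormedAddCommGroup F]
    [NormedSpace ℂ F] {f : ℂ → F} {a R M : ℝ} (hR : 0 < R)
    (hf : DifferentiableOn ℂ f {z | a < z.re}) (hM : ∀ z : ℂ, a < z.re → ‖f z‖ ≤ M)
    {z : ℂ} (hz : a + R < z.re) : ‖deriv f z‖ ≤ M / R := by
  have hball : closedBall z R ⊆ {w : ℂ | a < w.re} := fun w hw => by
    have : z.re - w.re ≤ R :=
      (le_abs_self _).trans
        ((Complex.abs_re_le_norm (z - w)).trans (mem_closedBall_iff_norm'.mp hw))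
    simp only [mem_ofPred_eq]
    linarith
  refine Complex.norm_deriv_le_of_forall_mem_sphere_norm_le hR
    ((hf.mono (closure_ball_subset_closedBall.trans hball)).diffContOnCl) fun w hw => ?_
  exact hM w (hball (sphere_subset_closedBall hw))

lemma Convex.injOn_of_norm_deriv_sub_le {𝕜 : Type*} [RCLike 𝕜] {s : Set 𝕜} (hs : Convex ℝ s)
    {f : 𝕜 → 𝕜} (hf : ∀ x ∈ s, DifferentiableAt 𝕜 f x) {c : 𝕜} {C : ℝ} (hC : C < ‖c‖)
    (bound : ∀ x ∈ s, ‖deriv f x - c‖ ≤ C) : InjOn f s := by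
  intro x hx y hy hxy
  have hderiv : ∀ z ∈ s, HasDerivAt (fun w => f w - c * w) (deriv f z - c) z := fun z hz =>
    (hf z hz).hasDerivAt.sub (((hasDerivAt_id' z).const_mul c).congr_deriv (mul_one c))
  have hmvt := hs.norm_image_sub_le_of_norm_deriv_le (fun z hz => (hderiv z hz).differentiableAt)
    (fun z hz => (hderiv z hz).deriv ▸ bound z hz) hx hy
  rw [hxy, sub_sub_sub_cancel_left, ← mul_sub, norm_mul, norm_sub_rev x] at hmvt
  by_contra hne
  exact absurd (le_of_mul_le_mul_right hmvt (norm_pos_iff.mpr (sub_ne_zero.mpr (Ne.symm hne))))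
    hC.not_ge

/-- If `P` is holomorphic on the half-plane `{Re Z > a}` and `|P(Z) − δZ| < ε` there,
with `δ ≥ 2` an integer and `ε > 0`, then `P` is injective on `{Re Z > a + 2ε/δ}`. -/
theorem stmt15 (δ : ℕ) (hδ : 2 ≤ δ) (a ε : ℝ) (hε : 0 < ε) (P : ℂ → ℂ)
    (hP : DifferentiableOn ℂ P {Z : ℂ | a < Z.re})
    (hB : ∀ Z : ℂ, a < Z.re → ‖P Z - (δ : ℂ) * Z‖ < ε) :
    Set.InjOn P {Z : ℂ | a + 2 * ε / (δ : ℝ) < Z.re} := by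
  have hδ_pos : (0 : ℝ) < δ := by exact_mod_cast (by omega : 0 < δ)
  have hR : 0 < 2 * ε / δ := by positivity
  have hPZ : ∀ Z : ℂ, a + 2 * ε / δ < Z.re → DifferentiableAt ℂ P Z := fun Z hZ =>
    hP.differentiableAt ((isOpen_lt continuous_const Complex.continuous_re).mem_nhds
      (show a < Z.re by linarith))
  refine (convex_halfSpace_re_gt _).injOn_of_norm_deriv_sub_le hPZ (c := (δ : ℂ)) (C := δ / 2)
    (by rw [Complex.norm_natCast]; linarith) fun Z hZ => ?_
  have hderiv : HasDerivAt (fun w => P w - δ * w) (deriv P Z - δ) Z :=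
    (hPZ Z hZ).hasDerivAt.sub (((hasDerivAt_id' Z).const_mul _).congr_deriv (mul_one _))
  calc ‖deriv P Z - δ‖ = ‖deriv (fun w => P w - δ * w) Z‖ := by rw [hderiv.deriv]
    _ ≤ ε / (2 * ε / δ) := Complex.norm_deriv_le_of_forall_re_gt_norm_le hR
        (hP.sub (differentiable_id.const_mul _).differentiableOn) (fun w hw => (hB w hw).le) hZ
    _ = δ / 2 := by field_simp
end

section
/- Let δ > d ≥ 1, γ ≥ 0, and define the sequence of maps Φₙ = F₀^{−n} ∘ Fⁿ where F₀(Z,W) = (δZ, γZ + dW) and F = F₀ + G with ‖G‖ := sup ‖F − F₀‖ < ε̃ on an F-invariant set S. Then for all n and all points of S, ‖Φ_{n+1} − Φₙ‖ ≤ max{ ε̃/δ^{n+1}, ε̃/d^{n+1} + γ_{n+1} ε̃/(δ^{n+1} d^{n+1}) }, where γ_n = Σ_{j=1}^n δ^{n−j} d^{j−1} γ. In particular, if d ≥ 2, the sequence (Φₙ) is uniformly Cauchy on S. -/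
noncomputable section

/-- `γ_n = Σ_{j=1}^n δ^{n−j} d^{j−1} γ`. -/
def gammaSeq (δ d γ : ℕ) (n : ℕ) : ℕ :=
  ∑ j ∈ Finset.range n, δ ^ (n - 1 - j) * d ^ j * γ

/-- `Φₙ = F₀^{−n} ∘ Fⁿ`, where `F₀(Z,W) = (δZ, γZ + dW)`, so that
`F₀^{−n}(Z,W) = (Z/δⁿ, W/dⁿ − γ_n Z/(δⁿ dⁿ))`. -/
def Phi (δ d γ : ℕ) (F : ℂ × ℂ → ℂ × ℂ) (n : ℕ) (p : ℂ × ℂ) : ℂ × ℂ :=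
  ((F^[n] p).1 / (δ : ℂ) ^ n,
    (F^[n] p).2 / (d : ℂ) ^ n -
      (gammaSeq δ d γ n : ℂ) * (F^[n] p).1 / ((δ : ℂ) ^ n * (d : ℂ) ^ n))

/-! Since `Φₙ = F₀^{−(n+1)} ∘ F₀ ∘ Fⁿ` and `F₀^{−(n+1)}` is linear,
`Φ_{n+1} − Φₙ = F₀^{−(n+1)} ∘ (F − F₀) ∘ Fⁿ`; as `S` is invariant, this is `F₀^{−(n+1)}` applied to
a vector of norm `< ε`. Since `γ_{n+1} ≤ (n+1) δⁿ γ`, for `d ≥ 2` these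
bounds are `O(n / dⁿ)`, hence summable, and the telescoping series `Φₙ − Φ₀` is uniformly Cauchy. -/

def F₀ (δ d γ : ℕ) (v : ℂ × ℂ) : ℂ × ℂ :=
  ((δ : ℂ) * v.1, (γ : ℂ) * v.1 + (d : ℂ) * v.2)

def F₀invPow (δ d γ n : ℕ) (v : ℂ × ℂ) : ℂ × ℂ :=
  (v.1 / (δ : ℂ) ^ n,
    v.2 / (d : ℂ) ^ n - (gammaSeq δ d γ n : ℂ) * v.1 / ((δ : ℂ) ^ n * (d : ℂ) ^ n))

section

variable {δ d γ : ℕ}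

theorem gammaSeq_succ (n : ℕ) : gammaSeq δ d γ (n + 1) = d * gammaSeq δ d γ n + δ ^ n * γ := by
  rw [gammaSeq, Finset.sum_range_succ', gammaSeq, Finset.mul_sum]
  simp only [Nat.add_sub_cancel, Nat.sub_zero, pow_zero, mul_one]
  congr 1
  refine Finset.sum_congr rfl fun j hj => ?_
  rw [show n - (j + 1) = n - 1 - j by omega]
  ring

theorem gammaSeq_succ_le (h : d ≤ δ) (n : ℕ) : gammaSeq δ d γ (n + 1) ≤ (n + 1) * δ ^ n * γ := by
  calc gammaSeq δ d γ (n + 1)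
      ≤ ∑ _j ∈ Finset.range (n + 1), δ ^ n * γ := by
        refine Finset.sum_le_sum fun j hj => Nat.mul_le_mul_right _ ?_
        calc δ ^ (n + 1 - 1 - j) * d ^ j ≤ δ ^ (n - j) * δ ^ j := by
              rw [Nat.add_sub_cancel]; gcongr
          _ = δ ^ n := by rw [← pow_add, Nat.sub_add_cancel (Finset.mem_range_succ_iff.1 hj)]
    _ = (n + 1) * δ ^ n * γ := by rw [Finset.sum_const, Finset.card_range, smul_eq_mul, mul_assoc]

theorem gammaSeq_succ_div_pow_le (h : d ≤ δ) (hδ : 0 < δ) (n : ℕ) :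
    (gammaSeq δ d γ (n + 1) : ℝ) / (δ : ℝ) ^ (n + 1) ≤ (n + 1) * γ := by
  have hδ' : (δ : ℝ) ≠ 0 := by positivity
  calc (gammaSeq δ d γ (n + 1) : ℝ) / (δ : ℝ) ^ (n + 1)
      ≤ (n + 1) * (δ : ℝ) ^ n * γ / (δ : ℝ) ^ (n + 1) := by
        gcongr
        exact_mod_cast gammaSeq_succ_le h n
    _ = (n + 1) * γ / δ := by field_simp; ring
    _ ≤ (n + 1) * γ := div_le_self (by positivity) (by exact_mod_cast hδ)

theorem F₀invPow_sub (n : ℕ) (v w : ℂ × ℂ) :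
    F₀invPow δ d γ n (v - w) = F₀invPow δ d γ n v - F₀invPow δ d γ n w := by
  ext <;> simp only [F₀invPow, Prod.fst_sub, Prod.snd_sub] <;> ring

theorem F₀invPow_succ_F₀ (hδ : δ ≠ 0) (hd : d ≠ 0) (n : ℕ) (v : ℂ × ℂ) :
    F₀invPow δ d γ (n + 1) (F₀ δ d γ v) = F₀invPow δ d γ n v := by
  have hδ' : (δ : ℂ) ≠ 0 := Nat.cast_ne_zero.2 hδ
  have hd' : (d : ℂ) ≠ 0 := Nat.cast_ne_zero.2 hd
  simp only [F₀invPow, F₀, gammaSeq_succ, Nat.cast_add, Nat.cast_mul, Nat.cast_pow]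
  ext <;> field_simp <;> ring

theorem Phi_eq_F₀invPow (F : ℂ × ℂ → ℂ × ℂ) (n : ℕ) (p : ℂ × ℂ) :
    Phi δ d γ F n p = F₀invPow δ d γ n (F^[n] p) := rfl

theorem Phi_succ_sub_Phi (hδ : δ ≠ 0) (hd : d ≠ 0) (F : ℂ × ℂ → ℂ × ℂ) (n : ℕ) (p : ℂ × ℂ) :
    Phi δ d γ F (n + 1) p - Phi δ d γ F n p =
      F₀invPow δ d γ (n + 1) (F (F^[n] p) - F₀ δ d γ (F^[n] p)) := by
  rw [F₀invPow_sub, F₀invPow_succ_F₀ hδ hd, Phi_eq_F₀invPow, Phi_eq_F₀invPow,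
    Function.iterate_succ_apply']

theorem norm_F₀invPow_le {n : ℕ} {v : ℂ × ℂ} {ε : ℝ} (hv : ‖v‖ ≤ ε) :
    ‖F₀invPow δ d γ n v‖ ≤
      max (ε / (δ : ℝ) ^ n)
        (ε / (d : ℝ) ^ n + (gammaSeq δ d γ n : ℝ) * ε / ((δ : ℝ) ^ n * (d : ℝ) ^ n)) := by
  have h1 : ‖v.1‖ ≤ ε := (norm_fst_le v).trans hv
  have h2 : ‖v.2‖ ≤ ε := (norm_snd_le v).trans hv
  rw [F₀invPow, Prod.norm_def]
  refine max_le_max ?_ ((norm_sub_le _ _).trans ?_)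
  · rw [norm_div, norm_pow, Complex.norm_natCast]
    gcongr
  · simp only [norm_div, norm_mul, norm_pow, Complex.norm_natCast]
    gcongr

theorem max_step_le_of_two_le (h2d : 2 ≤ d) (hdδ : d ≤ δ) {ε : ℝ} (hε : 0 ≤ ε) (n : ℕ) :
    max (ε / (δ : ℝ) ^ (n + 1))
        (ε / (d : ℝ) ^ (n + 1) +
          (gammaSeq δ d γ (n + 1) : ℝ) * ε / ((δ : ℝ) ^ (n + 1) * (d : ℝ) ^ (n + 1))) ≤
      (1 + γ) * ε * (n + 1) / (d : ℝ) ^ (n + 1) := by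
  have hdδR : (d : ℝ) ≤ δ := by exact_mod_cast hdδ
  have hγ := gammaSeq_succ_div_pow_le (γ := γ) hdδ (by omega) n
  have hnum : ε ≤ (1 + γ) * ε * (n + 1) := by
    nlinarith [show (0 : ℝ) ≤ γ * ε * (n + 1) + ε * n by positivity]
  refine max_le ?_ ?_
  · calc ε / (δ : ℝ) ^ (n + 1) ≤ ε / (d : ℝ) ^ (n + 1) := by gcongr
      _ ≤ _ := by gcongr
  · calc _ = (ε + (gammaSeq δ d γ (n + 1) : ℝ) / (δ : ℝ) ^ (n + 1) * ε) / (d : ℝ) ^ (n + 1) := by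
          ring
      _ ≤ _ := by
          gcongr
          nlinarith [mul_le_mul_of_nonneg_right hγ hε]

theorem summable_step_bound (h2d : 2 ≤ d) (ε : ℝ) :
    Summable fun n : ℕ => (1 + γ) * ε * (n + 1) / (d : ℝ) ^ (n + 1) := by
  have hr : ‖(d : ℝ)⁻¹‖ < 1 := by
    rw [norm_inv, Real.norm_natCast]
    exact inv_lt_one_of_one_lt₀ (by exact_mod_cast h2d)
  have := (summable_nat_add_iff (f := fun n : ℕ => (n : ℝ) ^ 1 * (d : ℝ)⁻¹ ^ n) 1).2
    (summable_pow_mul_geometric_of_norm_lt_one 1 hr)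
  refine (this.mul_left ((1 + γ) * ε)).congr fun n => ?_
  simp only [Nat.cast_add, Nat.cast_one, pow_one, inv_pow]
  ring

end

theorem uniformCauchySeqOn_of_dist_succ_le {α β : Type*} [PseudoMetricSpace β]
    {f : ℕ → α → β} {s : Set α} {u : ℕ → ℝ} (hu : Summable u)
    (hf : ∀ n, ∀ x ∈ s, dist (f n x) (f (n + 1) x) ≤ u n) :
    UniformCauchySeqOn f Filter.atTop s := by
  rw [Metric.uniformCauchySeqOn_iff]
  intro ε hε
  obtain ⟨N, hN⟩ := Metric.cauchySeq_iff.1 hu.hasSum.tendsto_sum_nat.cauchySeq ε hε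
  have key : ∀ m n, N ≤ m → m ≤ n → ∀ x ∈ s, dist (f m x) (f n x) < ε := by
    intro m n hm hmn x hx
    calc dist (f m x) (f n x) ≤ ∑ k ∈ Finset.Ico m n, u k :=
          dist_le_Ico_sum_of_dist_le (f := (f · x)) hmn fun _ _ => hf _ x hx
      _ = ∑ k ∈ Finset.range n, u k - ∑ k ∈ Finset.range m, u k := Finset.sum_Ico_eq_sub _ hmn
      _ ≤ dist (∑ k ∈ Finset.range n, u k) (∑ k ∈ Finset.range m, u k) := le_abs_self _
      _ < ε := hN n (hm.trans hmn) m hm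
  refine ⟨N, fun m hm n hn x hx => ?_⟩
  rcases le_total m n with hmn | hnm
  · exact key m n hm hmn x hx
  · exact dist_comm (f m x) (f n x) ▸ key n m hn hnm x hx

/-- If `δ > d ≥ 1`, `F₀(Z,W) = (δZ, γZ + dW)`, `F` maps the set `S` into itself and
`‖F − F₀‖ < ε` on `S`, then `‖Φ_{n+1} − Φₙ‖ ≤ max{ε/δ^{n+1}, ε/d^{n+1} + γ_{n+1} ε/(δ^{n+1} d^{n+1})}`
on `S`; in particular, if `d ≥ 2` the sequence `(Φₙ)` is uniformly Cauchy on `S`. -/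
theorem stmt17 (δ d γ : ℕ) (hd : 1 ≤ d) (hδd : d < δ)
    (S : Set (ℂ × ℂ)) (F : ℂ × ℂ → ℂ × ℂ) (hInv : Set.MapsTo F S S)
    (ε : ℝ) (hε : 0 < ε)
    (hF : ∀ p ∈ S, ‖F p - ((δ : ℂ) * p.1, (γ : ℂ) * p.1 + (d : ℂ) * p.2)‖ < ε) :
    (∀ n : ℕ, ∀ p ∈ S,
      ‖Phi δ d γ F (n + 1) p - Phi δ d γ F n p‖ ≤
        max (ε / (δ : ℝ) ^ (n + 1))
          (ε / (d : ℝ) ^ (n + 1) +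
            (gammaSeq δ d γ (n + 1) : ℝ) * ε / ((δ : ℝ) ^ (n + 1) * (d : ℝ) ^ (n + 1)))) ∧
    (2 ≤ d → UniformCauchySeqOn (fun n => Phi δ d γ F n) Filter.atTop S) := by
  have step : ∀ n : ℕ, ∀ p ∈ S,
      ‖Phi δ d γ F (n + 1) p - Phi δ d γ F n p‖ ≤
        max (ε / (δ : ℝ) ^ (n + 1))
          (ε / (d : ℝ) ^ (n + 1) +
            (gammaSeq δ d γ (n + 1) : ℝ) * ε / ((δ : ℝ) ^ (n + 1) * (d : ℝ) ^ (n + 1))) := by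
    intro n p hp
    rw [Phi_succ_sub_Phi (by omega) (by omega)]
    exact norm_F₀invPow_le (hF _ (hInv.iterate n hp)).le
  refine ⟨step, fun h2d => uniformCauchySeqOn_of_dist_succ_le (summable_step_bound (γ := γ) h2d ε) ?_⟩
  intro n p hp
  rw [dist_comm, dist_eq_norm]
  exact (step n p hp).trans (max_step_le_of_two_le h2d hδd.le hε.le n)
end
end
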